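/- A function α : G^3 → A satisfying the symmetry conditions α(x,y,z) = xy·α(y^{-1},yz,(xyz)^{-1}) = -α(x,yz,z^{-1}) = -α(xy,y^{-1},yz) together with the relation α(x,y,zt) + α(xy,z,t) = x·α(y,z,t) + α(xy,z,(yz)^{-1}) + α(x,yz,t) for all x,y,z,t ∈ G is a 3-cocycle, i.e., x·α(y,z,t) - α(xy,z,t) + α(x,yz,t) - α(x,y,zt) + α(x,y,z) = 0. -/
import Mathlib


/-- A function `α : G³ → A` satisfying the symmetry identities
`α(x,y,z) = xy•α(y⁻¹,yz,(xyz)⁻¹) = -α(x,yz,z⁻¹) = -α(xy,y⁻¹,yz)` together with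
`α(x,y,zt) + α(xy,z,t) = x•α(y,z,t) + α(xy,z,(yz)⁻¹) + α(x,yz,t)` is a 3-cocycle. -/
theorem symmetry_and_relation_implies_cocycle {G A : Type} [Group G] [AddCommGroup A]
    [DistribMulAction G A] (α : G → G → G → A)
    (h1 : ∀ x y z : G, α x y z = (x * y) • α y⁻¹ (y * z) (x * y * z)⁻¹)
    (h2 : ∀ x y z : G, α x y z = -α x (y * z) z⁻¹)
    (h3 : ∀ x y z : G, α x y z = -α (x * y) y⁻¹ (y * z))
    (h4 : ∀ x y z t : G, α x y (z * t) + α (x * y) z t =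
      x • α y z t + α (x * y) z (y * z)⁻¹ + α x (y * z) t) :
    ∀ x y z t : G, x • α y z t - α (x * y) z t + α x (y * z) t - α x y (z * t) + α x y z = 0 := by
  intro x y z t
  have key : α x y z = α (x * y) z (y * z)⁻¹ := by
    rw [h3 x y z, h2 (x * y) y⁻¹ (y * z)]
    rw [inv_mul_cancel_left]
    simp
  have h0 : x • α y z t + α (x * y) z (y * z)⁻¹ + α x (y * z) t -
      (α x y (z * t) + α (x * y) z t) = 0 := sub_eq_zero_of_eq (h4 x y z t).symm
  rw [key, ← h0]
  abel
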